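/- A strategy σ in the Robber and Captain game R&C(H1,H2) is monotone if, and only if, for each vertex v_i = (M_i,C_i) in the game tree T(σ) and each child (M_{i+1},C_{i+1}) of v_i in T(σ), the escape door ED(v_i,M_{i+1}) is empty. -/

import Mathlib

/-!
A move `M'` is monotone in `(M, C)` exactly when it guards the whole border of `C`. If a border
node `X` is left unguarded, the hyperedge joining `X` to `C` lets the Robber pass from `C` into
the `[M']`-component of `X`, which lies outside `C`. Conversely, if `∂C ⊆ M'`, an
`[M ∩ M']`-path starting in `C` can only step to nodes outside `M`, hence stays in `C` by
maximality of the component `C`. At the root, `C = nodes(H1)` has empty border and every move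
is monotone.
-/

/-- A hypergraph, identified (as in the paper) with its finite set of
finite hyperedges; its nodes are the vertices occurring in some hyperedge. -/
structure RCHypergraph (α : Type*) where
  edges : Finset (Finset α)

namespace RCHypergraph

variable {α : Type*}

/-- The set of nodes of a hypergraph. -/
def nodes (H : RCHypergraph α) : Set α := {x | ∃ h ∈ H.edges, x ∈ h}

/-- `H1 ≤ H2`: every hyperedge of `H1` is contained in some hyperedge of `H2`. -/
def HLe (H1 H2 : RCHypergraph α) : Prop := ∀ h1 ∈ H1.edges, ∃ h2 ∈ H2.edges, h1 ⊆ h2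

/-- `H` is contained in `H'`. -/
def Contained (H H' : RCHypergraph α) : Prop :=
  ∀ h ∈ H.edges, h ∉ H'.edges → ∃ h' ∈ H'.edges, h' ∉ H.edges ∧ h ⊆ h'

/-- `H` is properly contained in `H'`. -/
def ProperlyContained (H H' : RCHypergraph α) : Prop := H.Contained H' ∧ H ≠ H'

/-- A hypergraph is reduced if no hyperedge is a proper subset of another one. -/
def Reduced (H : RCHypergraph α) : Prop := ∀ h ∈ H.edges, ∀ h' ∈ H.edges, ¬ h ⊂ h'

end RCHypergraph

/-- The type of hyperedges of `H`. -/
abbrev Hyperedge {α : Type*} (H : RCHypergraph α) := {h : Finset α // h ∈ H.edges}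

/-- A join tree for a hypergraph `H`: a tree whose vertices are the hyperedges of `H`
such that, for every node `X`, the hyperedges containing `X` induce a connected subtree. -/
structure JoinTree {α : Type*} (H : RCHypergraph α) where
  T : SimpleGraph (Hyperedge H)
  isTree : T.IsTree
  node_connected : ∀ X : α, (T.induce {h : Hyperedge H | X ∈ h.1}).Preconnected

/-- A hypergraph is acyclic iff it has a join tree. -/
def RCHypergraph.Acyclic {α : Type*} (H : RCHypergraph α) : Prop := Nonempty (JoinTree H)

/-- `Ha` is a tree projection of `H1` w.r.t. `H2`. -/
def IsTreeProjection {α : Type*} (H1 H2 Ha : RCHypergraph α) : Prop :=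
  Ha.Acyclic ∧ H1.HLe Ha ∧ Ha.HLe H2

/-- `Ha` is a minimal tree projection of `H1` w.r.t. `H2`. -/
def IsMinimalTreeProjection {α : Type*} (H1 H2 Ha : RCHypergraph α) : Prop :=
  IsTreeProjection H1 H2 Ha ∧
  ∀ Ha' : RCHypergraph α, IsTreeProjection H1 H2 Ha' → ¬ Ha'.ProperlyContained Ha

namespace RCHypergraph

variable {α : Type*}

/-- `X` is `[V]`-adjacent to `Y`: some hyperedge contains both outside of `V`. -/
def Adj (H : RCHypergraph α) (V : Set α) (X Y : α) : Prop :=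
  ∃ h ∈ H.edges, X ∈ h ∧ Y ∈ h ∧ X ∉ V ∧ Y ∉ V

/-- There is a `[V]`-path from `X` to `Y`. -/
def VPath (H : RCHypergraph α) (V : Set α) : α → α → Prop :=
  Relation.ReflTransGen (H.Adj V)

/-- The set `W` is `[V]`-connected. -/
def VConnected (H : RCHypergraph α) (V W : Set α) : Prop :=
  ∀ X ∈ W, ∀ Y ∈ W, H.VPath V X Y

/-- `C` is a `[V]`-component of `H`: a maximal `[V]`-connected nonempty subset
of `nodes(H) \ V`. -/
def IsComponent (H : RCHypergraph α) (V C : Set α) : Prop :=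
  C.Nonempty ∧ C ⊆ H.nodes \ V ∧ H.VConnected V C ∧
  ∀ C' : Set α, C ⊆ C' → C' ⊆ H.nodes \ V → H.VConnected V C' → C' = C

/-- The frontier `Fr(C,H)`: the union of all hyperedges meeting `C`. -/
def Fr (H : RCHypergraph α) (C : Set α) : Set α :=
  {x | ∃ h ∈ H.edges, x ∈ h ∧ ∃ y ∈ C, y ∈ h}

/-- The border `∂(C,H) = Fr(C,H) \ C`. -/
def border (H : RCHypergraph α) (C : Set α) : Set α := H.Fr C \ C

/-- `X` `[V]`-touches the set `W`: `X` is `[∅]`-adjacent to some node `Z` from which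
there is a `[V]`-path to some node of `W`. -/
def Touches (H : RCHypergraph α) (V : Set α) (X : α) (W : Set α) : Prop :=
  ∃ Z : α, H.Adj ∅ X Z ∧ ∃ Y ∈ W, H.VPath V Z Y

end RCHypergraph

namespace JoinTree

variable {α : Type*} {H : RCHypergraph α}

/-- The vertices of the subtree rooted at `h_s` when the join tree is rooted at
(the side of) `h_r`, for adjacent vertices `h_r`, `h_s`. -/
def subtreeVerts (JT : JoinTree H) (h_r h_s : Hyperedge H) : Set (Hyperedge H) :=
  {v | JT.T.dist v h_s < JT.T.dist v h_r}

/-- The nodes occurring in the vertices of the subtree rooted at `h_s` (w.r.t. `h_r`). -/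
def subtreeNodes (JT : JoinTree H) (h_r h_s : Hyperedge H) : Set α :=
  {x | ∃ v ∈ JT.subtreeVerts h_r h_s, x ∈ v.1}

/-- `h_s` is a child of `h_r` in the join tree rooted at `root`. -/
def IsChild (JT : JoinTree H) (root h_r h_s : Hyperedge H) : Prop :=
  JT.T.Adj h_r h_s ∧ JT.T.dist root h_r < JT.T.dist root h_s

end JoinTree

/-- The sub-hypergraph of `H1` induced by the node set `N` is `[∅]`-connected. -/
def InducedConn {α : Type*} (H1 : RCHypergraph α) (N : Set α) : Prop :=
  ∀ X ∈ N, ∀ Y ∈ N,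
    Relation.ReflTransGen
      (fun a b => a ∈ N ∧ b ∈ N ∧ ∃ h ∈ H1.edges, a ∈ h ∧ b ∈ h) X Y

/-- A join tree of `Ha` is `H1`-connected. -/
def JoinTree.IsConnectedFor {α : Type*} {Ha : RCHypergraph α} (JT : JoinTree Ha)
    (H1 : RCHypergraph α) : Prop :=
  ∀ h_r h_s : Hyperedge Ha, JT.T.Adj h_r h_s → InducedConn H1 (JT.subtreeNodes h_r h_s)

/-- `C` is the component `C⊤(h)` associated with vertex `h` of the join tree rooted at
`root`: conventionally `nodes(H1)` for the root, and otherwise the unique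
`[h_p]`-component of `H1` (for `h_p` the parent of `h`) determined by the subtree at `h`. -/
def CtopAt {α : Type*} (H1 : RCHypergraph α) {Ha : RCHypergraph α} (JT : JoinTree Ha)
    (root h : Hyperedge Ha) (C : Set α) : Prop :=
  (h = root ∧ C = H1.nodes) ∨
  ∃ h_p : Hyperedge Ha, JT.IsChild root h_p h ∧ H1.IsComponent (h_p.1 : Set α) C ∧
    JT.subtreeNodes h_p h = C ∪ ((h.1 : Set α) ∩ (h_p.1 : Set α))

/-- The join tree `JT` of `Ha`, rooted at `root`, is an `H1`-component tree. -/
def JoinTree.IsComponentTreeFor {α : Type*} {Ha : RCHypergraph α} (JT : JoinTree Ha)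
    (H1 : RCHypergraph α) (root : Hyperedge Ha) : Prop :=
  (∀ h_r h_s : Hyperedge Ha, JT.IsChild root h_r h_s →
    (∃! C : Set α, H1.IsComponent (h_r.1 : Set α) C ∧
      JT.subtreeNodes h_r h_s = C ∪ ((h_s.1 : Set α) ∩ (h_r.1 : Set α))) ∧
    (∀ C : Set α, H1.IsComponent (h_r.1 : Set α) C →
      JT.subtreeNodes h_r h_s = C ∪ ((h_s.1 : Set α) ∩ (h_r.1 : Set α)) →
      ((h_s.1 : Set α) ∩ C).Nonempty ∧ (h_s.1 : Set α) ⊆ H1.Fr C)) ∧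
  (∀ h_r : Hyperedge Ha, ∀ Ctop : Set α, CtopAt H1 JT root h_r Ctop →
    ∀ C_r : Set α, H1.IsComponent (h_r.1 : Set α) C_r → C_r ⊆ Ctop →
    ∃! h_s : Hyperedge Ha, JT.IsChild root h_r h_s ∧
      JT.subtreeNodes h_r h_s = C_r ∪ ((h_s.1 : Set α) ∩ (h_r.1 : Set α)))

/-! ### The Robber and Captain game -/

/-- A position for the Captain: a set of nodes included in some hyperedge of `H2`. -/
def IsPosition {α : Type*} (H2 : RCHypergraph α) (M : Set α) : Prop :=
  ∃ h2 ∈ H2.edges, M ⊆ (h2 : Set α)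

/-- A configuration of the game `R&C(H1,H2)`. -/
def IsConfig {α : Type*} (H1 H2 : RCHypergraph α) (M C : Set α) : Prop :=
  IsPosition H2 M ∧ (H1.IsComponent M C ∨ C = ∅ ∨ (M = ∅ ∧ C = H1.nodes))

/-- `C_j` is an `[(M_i,C_i),M_j]`-escape component: an `[M_j]`-component of `H1`
such that `C_i ∪ C_j` is `[M_i ∩ M_j]`-connected. -/
def EscapeComp {α : Type*} (H1 : RCHypergraph α) (M_i C_i M_j C_j : Set α) : Prop :=
  H1.IsComponent M_j C_j ∧ H1.VConnected (M_i ∩ M_j) (C_i ∪ C_j)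

/-- The escape door `ED((M_i,C),M') = ∂(C,H1) \ M'` (it only depends on `C` and `M'`). -/
def escapeDoor {α : Type*} (H1 : RCHypergraph α) (C M' : Set α) : Set α :=
  H1.border C \ M'

/-- `σ` is a strategy for the Captain in `R&C(H1,H2)`. -/
def IsStrategy {α : Type*} (H1 H2 : RCHypergraph α) (σ : Set α → Set α → Set α) : Prop :=
  ∀ M C : Set α, IsConfig H1 H2 M C → C ≠ ∅ →
    IsPosition H2 (σ M C) ∧ σ M C ⊆ H1.Fr C

/-- One step of the game played according to `σ`: from configuration `p` the Captain
moves to `σ p.1 p.2`, and the Robber either selects an escape component or is captured. -/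
def GameStep {α : Type*} (H1 : RCHypergraph α) (σ : Set α → Set α → Set α)
    (p q : Set α × Set α) : Prop :=
  p.2 ≠ ∅ ∧ q.1 = σ p.1 p.2 ∧
    (EscapeComp H1 p.1 p.2 q.1 q.2 ∨
      ((∀ C : Set α, ¬ EscapeComp H1 p.1 p.2 q.1 C) ∧ q.2 = ∅))

/-- `p` is a vertex of the game tree `T(σ)` (reachable from the root `(∅, nodes(H1))`). -/
def InGameTree {α : Type*} (H1 : RCHypergraph α) (σ : Set α → Set α → Set α)
    (p : Set α × Set α) : Prop :=
  Relation.ReflTransGen (GameStep H1 σ) (∅, H1.nodes) p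

/-- `σ` is winning: the game tree `T(σ)` is finite, i.e., there is no infinite play. -/
def Winning {α : Type*} (H1 : RCHypergraph α) (σ : Set α → Set α → Set α) : Prop :=
  ¬ ∃ f : ℕ → Set α × Set α, f 0 = (∅, H1.nodes) ∧ ∀ n, GameStep H1 σ (f n) (f (n + 1))

/-- `M_j` is a monotone move in `(M_i, C_i)`. -/
def MonotoneMove {α : Type*} (H1 : RCHypergraph α) (M_i C_i M_j : Set α) : Prop :=
  ∀ C : Set α, EscapeComp H1 M_i C_i M_j C → C ⊆ C_i

/-- `σ` is a monotone strategy. -/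
def MonotoneStrategy {α : Type*} (H1 : RCHypergraph α) (σ : Set α → Set α → Set α) : Prop :=
  ∀ p q : Set α × Set α, InGameTree H1 σ p → GameStep H1 σ p q →
    MonotoneMove H1 p.1 p.2 q.1


namespace RCHypergraph

variable {α : Type*} {H : RCHypergraph α} {V C : Set α} {X Y : α}

theorem Adj.symm (h : H.Adj V X Y) : H.Adj V Y X := by
  obtain ⟨e, he, hX, hY, hXV, hYV⟩ := h
  exact ⟨e, he, hY, hX, hYV, hXV⟩

theorem VPath.symm (h : H.VPath V X Y) : H.VPath V Y X := by
  induction h with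
  | refl => exact .refl
  | tail _ hadj ih => exact .head hadj.symm ih

theorem VPath.mono {V' : Set α} (hV : V' ⊆ V) (h : H.VPath V X Y) : H.VPath V' X Y := by
  refine Relation.ReflTransGen.mono (fun a b hab => ?_) _ _ h
  obtain ⟨e, he, ha, hb, haV, hbV⟩ := hab
  exact ⟨e, he, ha, hb, fun h => haV (hV h), fun h => hbV (hV h)⟩

theorem isComponent_setOf_vPath (hX : X ∈ H.nodes \ V) :
    H.IsComponent V {Z | H.VPath V X Z} := by
  have hsub : {Z | H.VPath V X Z} ⊆ H.nodes \ V := by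
    intro Z hZ
    induction hZ with
    | refl => exact hX
    | tail _ hadj _ =>
      obtain ⟨e, he, _, hc, _, hcV⟩ := hadj
      exact ⟨⟨e, he, hc⟩, hcV⟩
  refine ⟨⟨X, .refl⟩, hsub, fun Z hZ W hW => hZ.symm.trans hW, ?_⟩
  intro C' hC' _ hconn
  exact Set.Subset.antisymm (fun Z hZ => hconn X (hC' .refl) Z hZ) hC'

theorem IsComponent.mem_of_adj (hC : H.IsComponent V C) (hX : X ∈ C) (hXY : H.Adj V X Y) :
    Y ∈ C := by
  have hreach := isComponent_setOf_vPath (hC.2.1 hX)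
  have hCreach : C ⊆ {Z | H.VPath V X Z} := fun Z hZ => hC.2.2.1 X hX Z hZ
  rw [← hC.2.2.2 _ hCreach hreach.2.1 hreach.2.2.1]
  exact .single hXY

theorem IsComponent.mem_of_vPath_inter {M' : Set α} (hC : H.IsComponent V C)
    (hborder : H.border C ⊆ M') (hX : X ∈ C) (hXY : H.VPath (V ∩ M') X Y) : Y ∈ C := by
  induction hXY with
  | refl => exact hX
  | @tail a b _ hab ha =>
    by_contra hb
    obtain ⟨e, he, hae, hbe, haV, hbV⟩ := hab
    have hbM' : b ∈ M' := hborder ⟨⟨e, he, hbe, a, ha, hae⟩, hb⟩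
    exact hb (hC.mem_of_adj ha ⟨e, he, hae, hbe, (hC.2.1 ha).2, fun h => hbV ⟨h, hbM'⟩⟩)

theorem border_nodes : H.border H.nodes = ∅ :=
  Set.eq_empty_of_forall_notMem fun _ ⟨⟨e, he, hXe, _⟩, hX⟩ => hX ⟨e, he, hXe⟩

theorem IsComponent.escapeComp_of_mem_escapeDoor {M M' : Set α}
    (hC : H.IsComponent M C) (hX : X ∈ escapeDoor H C M') :
    EscapeComp H M C M' {Z | H.VPath M' X Z} := by
  obtain ⟨⟨⟨e, he, hXe, Y, hYC, hYe⟩, -⟩, hXM'⟩ := hX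
  have hYX : H.Adj (M ∩ M') Y X :=
    ⟨e, he, hYe, hXe, fun h => (hC.2.1 hYC).2 h.1, fun h => hXM' h.2⟩
  have hto_X : ∀ W ∈ C ∪ {Z | H.VPath M' X Z}, H.VPath (M ∩ M') W X := by
    rintro W (hW | hW)
    · exact ((hC.2.2.1 W hW Y hYC).mono Set.inter_subset_left).tail hYX
    · exact (hW.mono Set.inter_subset_right).symm
  exact ⟨isComponent_setOf_vPath ⟨⟨e, he, hXe⟩, hXM'⟩,
    fun U hU W hW => (hto_X U hU).trans (hto_X W hW).symm⟩

theorem IsComponent.monotoneMove_iff_escapeDoor_eq_empty {M M' : Set α}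
    (hC : H.IsComponent M C) : MonotoneMove H M C M' ↔ escapeDoor H C M' = ∅ := by
  constructor
  · intro hmono
    refine Set.eq_empty_of_forall_notMem fun X hX => hX.1.2 ?_
    exact hmono _ (hC.escapeComp_of_mem_escapeDoor hX) Relation.ReflTransGen.refl
  · intro hdoor C' hesc W hW
    obtain ⟨Y, hY⟩ := hC.1
    exact hC.mem_of_vPath_inter (Set.sdiff_eq_empty.1 hdoor) hY
      (hesc.2 Y (.inl hY) W (.inr hW))

theorem monotoneMove_nodes (M M' : Set α) : MonotoneMove H M H.nodes M' :=
  fun _ hesc _ hX => (hesc.1.2.1 hX).1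

end RCHypergraph

section

variable {α : Type*} {H1 : RCHypergraph α}

theorem InGameTree.snd_eq_nodes_or_isComponent_or_eq_empty {σ : Set α → Set α → Set α}
    {p : Set α × Set α} (hp : InGameTree H1 σ p) :
    p.2 = H1.nodes ∨ H1.IsComponent p.1 p.2 ∨ p.2 = ∅ := by
  induction hp with
  | refl => exact .inl rfl
  | tail _ hstep _ =>
    rcases hstep.2.2 with hesc | ⟨-, hq⟩
    · exact .inr (.inl hesc.1)
    · exact .inr (.inr hq)

theorem InGameTree.monotoneMove_iff_escapeDoor_eq_empty {σ : Set α → Set α → Set α}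
    {p : Set α × Set α} (hp : InGameTree H1 σ p) (hne : p.2 ≠ ∅) (M' : Set α) :
    MonotoneMove H1 p.1 p.2 M' ↔ escapeDoor H1 p.2 M' = ∅ := by
  rcases hp.snd_eq_nodes_or_isComponent_or_eq_empty with hnodes | hC | hempty
  · rw [hnodes, escapeDoor, RCHypergraph.border_nodes, Set.empty_sdiff]
    exact iff_of_true (RCHypergraph.monotoneMove_nodes _ _) rfl
  · exact hC.monotoneMove_iff_escapeDoor_eq_empty
  · exact absurd hempty hne

end

theorem monotone_iff_escape_doors_empty_general {α : Type*} (H1 : RCHypergraph α)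
    (σ : Set α → Set α → Set α) :
    MonotoneStrategy H1 σ ↔
      ∀ p q : Set α × Set α, InGameTree H1 σ p → GameStep H1 σ p q →
        escapeDoor H1 p.2 q.1 = ∅ :=
  forall₂_congr fun _ q => imp_congr_right fun hp => imp_congr_right fun hstep =>
    hp.monotoneMove_iff_escapeDoor_eq_empty hstep.1 q.1

theorem monotone_iff_escape_doors_empty {α : Type*} (H1 H2 : RCHypergraph α)
    (hle : H1.HLe H2) (σ : Set α → Set α → Set α) (hσ : IsStrategy H1 H2 σ) :
    MonotoneStrategy H1 σ ↔
      ∀ p q : Set α × Set α, InGameTree H1 σ p → GameStep H1 σ p q →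
        escapeDoor H1 p.2 q.1 = ∅ :=
  monotone_iff_escape_doors_empty_general H1 σ
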